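/- arXiv:0810.3223 — 5 statements merged into one kernel-verified Lean document; each statement's English description precedes it below -/
import Mathlib

section
/- Let G be a finite abelian group of order |G| > p where p is the smallest prime divisor of |G|. Then there exists a subset S of G \ {0} with |S| = |G|/p + p - 3 such that not every element of G is a nonempty sum of distinct elements of S; in other words, the critical number of G is at least |G|/p + p - 2. -/
/-- The set of all sums of nonempty subsets of `S`. -/
noncomputable def sumsNE {α : Type*} [AddCommMonoid α] (S : Finset α) : Finset α := by
  classical exact (S.powerset.erase ∅).image fun T => T.sum id

/-! Map `G` onto `ZMod p` by some `φ` and take for `S` the nonzero elements of `ker φ` together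
with `p - 2` elements of `φ⁻¹ 1`. The image under `φ` of a subset sum of `S` is the number of its
terms outside `ker φ`, which lies in `{0, …, p - 2}`; hence no subset sum lies in `φ⁻¹ (-1)`.
The fibre `φ⁻¹ 1` has `|G| / p ≥ p` elements because `p` is the least prime factor of `|G|`. -/

open Finset

theorem Nat.le_div_of_forall_prime_dvd_le {n p : ℕ} (hp : p.Prime) (hdvd : p ∣ n)
    (hmin : ∀ r : ℕ, r.Prime → r ∣ n → p ≤ r) (hlt : p < n) : p ≤ n / p := by
  have hn : n ≠ 1 := by have := hp.two_le; omega
  obtain rfl : p = n.minFac :=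
    le_antisymm (hmin _ (minFac_prime hn) (minFac_dvd n)) (minFac_le_of_dvd hp.two_le hdvd)
  refine minFac_le_div (by omega) fun hprime => ?_
  have := (Nat.prime_dvd_prime_iff_eq hp hprime).1 hdvd
  omega

theorem exists_surjective_addMonoidHom_zmod_of_dvd_card (G : Type*) [AddCommGroup G] [Finite G]
    {p : ℕ} (hp : p.Prime) (hdvd : p ∣ Nat.card G) :
    ∃ φ : G →+ ZMod p, Function.Surjective φ := by
  obtain ⟨ι, _, n, hn, ⟨e⟩⟩ := AddCommGroup.equiv_directSum_zmod_of_finite' G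
  let e' : G ≃+ ∀ i, ZMod (n i) := e.trans (DirectSum.addEquivProd _)
  have : ∀ i, NeZero (n i) := fun i => ⟨by have := hn i; omega⟩
  have hcard : Nat.card G = ∏ i, n i := by
    simp [Nat.card_congr e'.toEquiv, Nat.card_pi]
  obtain ⟨i, -, hpi⟩ := hp.prime.exists_mem_finset_dvd (hcard ▸ hdvd)
  refine ⟨(ZMod.castHom hpi (ZMod p)).toAddMonoidHom.comp
    ((Pi.evalAddMonoidHom _ i).comp e'.toAddMonoidHom), ?_⟩
  exact (ZMod.castHom_surjective hpi).comp ((Function.surjective_eval i).comp e'.surjective)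

theorem AddMonoidHom.card_fiber_mul_card_eq_card {G H : Type*} [AddGroup G] [Fintype G]
    [AddMonoid H] [Fintype H] [DecidableEq H] (φ : G →+ H) (hφ : Function.Surjective φ)
    (c : H) : #{g | φ g = c} * Fintype.card H = Fintype.card G := by
  calc #{g | φ g = c} * Fintype.card H = ∑ d : H, #{g | φ g = d} := by
        rw [sum_congr rfl fun d _ => card_fiber_eq_of_mem_range φ (hφ d) (hφ c), sum_const,
          card_univ, smul_eq_mul, mul_comm]
    _ = Fintype.card G := (card_eq_sum_card_fiberwise fun g _ => mem_univ (φ g)).symm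

section SumsThroughHom

variable {G R : Type*} [AddCommGroup G] [DecidableEq G]

theorem map_sum_eq_card_sdiff [AddCommMonoidWithOne R] (φ : G →+ R) {A T U : Finset G}
    (hA : ∀ a ∈ A, φ a = 0) (hT : ∀ t ∈ T, φ t = 1) (hU : U ⊆ A ∪ T) :
    φ (∑ u ∈ U, u) = #(U \ A) := by
  have hUA : U \ A ⊆ T := sdiff_le_iff.2 hU
  rw [map_sum, ← sum_inter_add_sum_sdiff U A, sum_eq_zero fun u hu => hA u (mem_inter.1 hu).2,
    sum_congr rfl fun u hu => hT u (hUA hu), sum_const, nsmul_one, zero_add]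

theorem map_ne_neg_one_of_mem_sumsNE {p : ℕ} (φ : G →+ ZMod p) {A T : Finset G}
    (hA : ∀ a ∈ A, φ a = 0) (hT : ∀ t ∈ T, φ t = 1) (hTcard : #T + 1 < p) {x : G}
    (hx : x ∈ sumsNE (A ∪ T)) : φ x ≠ -1 := by
  rw [sumsNE] at hx
  simp only [mem_image, mem_erase, mem_powerset] at hx
  obtain ⟨U, ⟨-, hU⟩, rfl⟩ := hx
  intro hsum
  have hdvd : p ∣ #(U \ A) + 1 := by
    rw [← ZMod.natCast_eq_zero_iff, Nat.cast_succ, ← map_sum_eq_card_sdiff φ hA hT hU]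
    simpa [eq_neg_iff_add_eq_zero] using hsum
  have := card_le_card (sdiff_le_iff.2 hU)
  have := Nat.le_of_dvd (by omega) hdvd
  omega

end SumsThroughHom

theorem stmt1 (G : Type*) [AddCommGroup G] [Fintype G] (p : ℕ)
    (hp : p.Prime) (hdvd : p ∣ Fintype.card G)
    (hmin : ∀ r : ℕ, r.Prime → r ∣ Fintype.card G → p ≤ r)
    (hlt : p < Fintype.card G) :
    ∃ S : Finset G, (0 : G) ∉ S ∧ S.card = Fintype.card G / p + p - 3 ∧
      sumsNE S ≠ Finset.univ := by
  classical
  have : Fact p.Prime := ⟨hp⟩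
  have hp2 := hp.two_le
  have hpm := Nat.le_div_of_forall_prime_dvd_le hp hdvd hmin hlt
  obtain ⟨φ, hφ⟩ := exists_surjective_addMonoidHom_zmod_of_dvd_card G hp
    (Nat.card_eq_fintype_card (α := G) ▸ hdvd)
  have hfiber (c : ZMod p) : #{g | φ g = c} = Fintype.card G / p := by
    rw [← φ.card_fiber_mul_card_eq_card hφ c, ZMod.card, Nat.mul_div_cancel _ hp.pos]
  obtain ⟨T, hT, hTcard⟩ := exists_subset_card_eq (s := {g | φ g = 1}) (n := p - 2)
    (by rw [hfiber]; omega)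
  have hT1 : ∀ t ∈ T, φ t = 1 := fun t ht => (mem_filter.1 (hT ht)).2
  let A : Finset G := ({g | φ g = 0} : Finset G).erase 0
  have hA0 : ∀ a ∈ A, φ a = 0 := fun a ha => (mem_filter.1 (mem_of_mem_erase ha)).2
  have hAT : Disjoint A T := disjoint_left.2 fun a ha haT => by simpa [hA0 a ha] using hT1 a haT
  refine ⟨A ∪ T, ?_, ?_, fun h => ?_⟩
  · simpa [A] using fun h0 => by simpa using hT1 0 h0
  · rw [card_union_of_disjoint hAT, card_erase_of_mem (by simp), hfiber, hTcard]
    omega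
  · obtain ⟨y, hy⟩ := hφ (-1)
    exact map_ne_neg_one_of_mem_sumsNE φ hA0 hT1 (by omega) (h ▸ mem_univ y) hy
end

section
/- Let H be a subgroup of a finite abelian group G of index p (where p is a prime), let h ∈ G \ H, and let S = (H \ {0}) ∪ {h₁, ..., h_{p-2}} where each hᵢ ∈ h + H. Then Σ(S) is contained in H ∪ (h+H) ∪ ... ∪ ((p-2)h + H), and hence |Σ(S)| ≤ (p-1)|H| < |G|. -/
/-!
A nonempty subset sum of `S` is a sum of elements of `H` plus `k` elements of `h + H`,
for some `k ≤ p - 2`, so it lies in `k • h + H`. These `p - 1` cosets have `(p - 1) |H|`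
elements in all, one coset fewer than `G`.
-/

open Pointwise

namespace AddSubgroup

variable {G : Type*} [AddCommGroup G] (H : AddSubgroup G)

theorem sum_sub_card_filter_not_mem_nsmul_mem [DecidablePred (· ∈ H)] {T : Finset G} {c : G}
    (hT : ∀ t ∈ T, t ∉ H → t - c ∈ H) :
    ∑ t ∈ T, t - (T.filter (· ∉ H)).card • c ∈ H := by
  have h_in : ∑ t ∈ T.filter (· ∈ H), t ∈ H :=
    H.sum_mem fun t ht => (Finset.mem_filter.1 ht).2
  have h_out : ∑ t ∈ T.filter (· ∉ H), (t - c) ∈ H := H.sum_mem fun t ht =>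
    hT t (Finset.mem_filter.1 ht).1 (Finset.mem_filter.1 ht).2
  rw [Finset.sum_sub_distrib, Finset.sum_const] at h_out
  rw [← Finset.sum_filter_add_sum_filter_not T (· ∈ H), add_sub_assoc]
  exact H.add_mem h_in h_out

theorem sumsNE_subset_iUnion_nsmul_vadd {S A : Finset G} {c : G}
    (hS : ∀ s ∈ S, s ∈ H ∨ s ∈ A) (hA : ∀ a ∈ A, a - c ∈ H) :
    (sumsNE S : Set G) ⊆ ⋃ k ∈ Finset.range (A.card + 1), (k • c) +ᵥ (H : Set G) := by
  classical
  intro x hx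
  simp only [sumsNE, Finset.coe_image, Set.mem_image, Finset.mem_coe, Finset.mem_erase,
    Finset.mem_powerset] at hx
  obtain ⟨T, ⟨-, hTS⟩, rfl⟩ := hx
  have h_out : T.filter (· ∉ H) ⊆ A := fun t ht => by
    rw [Finset.mem_filter] at ht
    exact (hS t (hTS ht.1)).resolve_left ht.2
  have hT : ∀ t ∈ T, t ∉ H → t - c ∈ H := fun t ht htH =>
    hA t (h_out (Finset.mem_filter.2 ⟨ht, htH⟩))
  refine Set.mem_biUnion (Finset.mem_range_succ_iff.2 (Finset.card_le_card h_out)) ?_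
  rw [Set.mem_vadd_set_iff_neg_vadd_mem, vadd_eq_add, neg_add_eq_sub]
  exact H.sum_sub_card_filter_not_mem_nsmul_mem hT

theorem card_le_card_mul_of_subset_iUnion_vadd [Finite G] {ι : Type*} (s : Finset G)
    (I : Finset ι) (g : ι → G) (hs : (s : Set G) ⊆ ⋃ i ∈ I, g i +ᵥ (H : Set G)) :
    s.card ≤ I.card * Nat.card H :=
  calc s.card = (s : Set G).ncard := (Set.ncard_coe_finset s).symm
    _ ≤ (⋃ i ∈ I, g i +ᵥ (H : Set G)).ncard := Set.ncard_le_ncard hs (Set.toFinite _)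
    _ ≤ ∑ i ∈ I, (g i +ᵥ (H : Set G)).ncard := Finset.set_ncard_biUnion_le I _
    _ = I.card * Nat.card H := by simp only [Set.ncard_vadd_set, Finset.sum_const, smul_eq_mul]; rfl

end AddSubgroup

theorem stmt2_general (G : Type*) [AddCommGroup G] [Fintype G] [DecidableEq G]
    (p : ℕ) (H : AddSubgroup G) [DecidablePred (· ∈ H)]
    (hidx : H.index = p) (h : G) (hh : h ∉ H)
    (f : Fin (p - 2) → G)
    (hf : ∀ i, f i - h ∈ H)
    (S : Finset G)
    (hS : S = (Finset.univ.filter (· ∈ H)).erase 0 ∪ Finset.image f Finset.univ) :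
    (↑(sumsNE S) : Set G) ⊆ (⋃ ν ∈ Finset.range (p - 1), ((ν • h) +ᵥ (H : Set G))) ∧
    (sumsNE S).card ≤ (p - 1) * Nat.card H ∧ (p - 1) * Nat.card H < Fintype.card G := by
  have hp : 1 < p :=
    hidx ▸ H.one_lt_index_of_ne_top fun htop => hh (htop ▸ AddSubgroup.mem_top h)
  have hS_cases : ∀ s ∈ S, s ∈ H ∨ s ∈ Finset.image f Finset.univ := by
    intro s hs
    rw [hS, Finset.mem_union, Finset.mem_erase, Finset.mem_filter] at hs
    exact hs.imp (fun hs => hs.2.2) id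
  have hf_coset : ∀ a ∈ Finset.image f Finset.univ, a - h ∈ H := by
    simpa only [Finset.mem_image, Finset.mem_univ, true_and, forall_exists_index,
      forall_apply_eq_imp_iff] using hf
  have hA_card : (Finset.image f Finset.univ).card + 1 ≤ p - 1 := by
    have := (Finset.card_image_le (s := Finset.univ) (f := f)).trans_eq (Finset.card_fin (p - 2))
    omega
  have hsub : (sumsNE S : Set G) ⊆ ⋃ ν ∈ Finset.range (p - 1), (ν • h) +ᵥ (H : Set G) :=
    (H.sumsNE_subset_iUnion_nsmul_vadd hS_cases hf_coset).trans <|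
      Set.biUnion_subset_biUnion_left (by simpa using hA_card)
  refine ⟨hsub, ?_, ?_⟩
  · simpa using H.card_le_card_mul_of_subset_iUnion_vadd _ _ _ hsub
  · rw [← Nat.card_eq_fintype_card, ← H.index_mul_card, hidx]
    exact Nat.mul_lt_mul_of_pos_right (by omega) Nat.card_pos

theorem stmt2 (G : Type*) [AddCommGroup G] [Fintype G] [DecidableEq G]
    (p : ℕ) (hp : p.Prime) (H : AddSubgroup G) [DecidablePred (· ∈ H)]
    (hidx : H.index = p) (h : G) (hh : h ∉ H)
    (f : Fin (p - 2) → G) (hinj : Function.Injective f)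
    (hf : ∀ i, f i - h ∈ H)
    (S : Finset G)
    (hS : S = (Finset.univ.filter (· ∈ H)).erase 0 ∪ Finset.image f Finset.univ) :
    (↑(sumsNE S) : Set G) ⊆ (⋃ ν ∈ Finset.range (p - 1), ((ν • h) +ᵥ (H : Set G))) ∧
    (sumsNE S).card ≤ (p - 1) * Nat.card H ∧ (p - 1) * Nat.card H < Fintype.card G :=
  stmt2_general G p H hidx h hh f hf S hS
end

section
/- (Cauchy–Davenport for several sets) Let G be a cyclic group of prime order p, s ≥ 2, and A₁, ..., A_s nonempty subsets of G. Then |A₁ + ... + A_s| ≥ min{p, |A₁| + ... + |A_s| - s + 1}. -/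
open Finset Pointwise

namespace Finset

variable {ι G : Type*} [DecidableEq G]

theorem image_piFinset_sum_eq_sum [AddCommMonoid G] [Fintype ι] [DecidableEq ι]
    (A : ι → Finset G) :
    ((Fintype.piFinset A).image fun f => ∑ i, f i) = ∑ i, A i := by
  apply coe_injective
  ext x
  simp [Set.mem_fintype_sum]

theorem sum_nonempty [AddCommMonoid G] {t : Finset ι} {A : ι → Finset G}
    (hA : ∀ i ∈ t, (A i).Nonempty) : (∑ i ∈ t, A i).Nonempty := by
  induction t using cons_induction with
  | empty => simp
  | cons a t _ ih =>
    rw [sum_cons]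
    exact (hA a (mem_cons_self a t)).add (ih fun i hi => hA i (mem_cons_of_mem hi))

/-- Iterating the two-set Cauchy–Davenport bound: once some partial sumset reaches the size of the
smallest subgroup, every further summand keeps it there. -/
theorem min_minOrder_le_card_sum [AddCommGroup G] (t : Finset ι) (A : ι → Finset G)
    (hA : ∀ i ∈ t, (A i).Nonempty) :
    min (AddMonoid.minOrder G) ↑(∑ i ∈ t, (#(A i) - 1) + 1) ≤ #(∑ i ∈ t, A i) := by
  induction t using cons_induction with
  | empty => simp
  | cons a t _ ih =>
    rw [sum_cons, sum_cons]
    have hAa : 0 < #(A a) := (hA a (mem_cons_self a t)).card_pos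
    have hX := ih fun i hi => hA i (mem_cons_of_mem hi)
    have hcd := cauchy_davenport_minOrder_add (hA a (mem_cons_self a t))
      (sum_nonempty fun i hi => hA i (mem_cons_of_mem hi))
    refine le_trans (le_min (min_le_left _ _) ?_) hcd
    rcases min_le_iff.1 hX with hm | hS
    · exact (min_le_left _ _).trans (hm.trans (Nat.cast_le.2 (by omega)))
    · exact (min_le_right _ _).trans (Nat.cast_le.2 (by norm_cast at hS; omega))

end Finset

theorem stmt3_general (p s : ℕ) (hp : p.Prime)
    (A : Fin s → Finset (ZMod p)) (hA : ∀ i, (A i).Nonempty) :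
    min p (∑ i, (A i).card - s + 1) ≤
      ((Fintype.piFinset A).image fun f => ∑ i, f i).card := by
  have h := min_minOrder_le_card_sum univ A fun i _ => hA i
  rw [ZMod.minOrder_of_prime hp, sum_tsub_distrib _ fun i _ => (hA i).card_pos] at h
  rw [image_piFinset_sum_eq_sum]
  simp only [sum_const, card_univ, Fintype.card_fin, smul_eq_mul, mul_one] at h
  simpa only [min_le_iff, Nat.cast_le] using h

theorem stmt3 (p s : ℕ) (hp : p.Prime) (hs : 2 ≤ s)
    (A : Fin s → Finset (ZMod p)) (hA : ∀ i, (A i).Nonempty) :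
    min p (∑ i, (A i).card - s + 1) ≤
      ((Fintype.piFinset A).image fun f => ∑ i, f i).card :=
  stmt3_general p s hp A hA
end

section
/- Let G = ℤ/qℤ with q prime and let S₀ ⊆ G \ {0} with |S₀| = λ ≥ 2. Then |Σ(S₀) ∪ {0}| ≥ min{q, 2λ - 1}. -/
open Finset Pointwise

section SubsetSums

variable {α : Type*} [AddCommMonoid α] [DecidableEq α]

def subsetSums (S : Finset α) : Finset α :=
  S.powerset.image fun t => ∑ x ∈ t, x

lemma mem_subsetSums {S : Finset α} {x : α} : x ∈ subsetSums S ↔ ∃ t ⊆ S, ∑ y ∈ t, y = x := by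
  simp [subsetSums]

lemma insert_zero_sumsNE (S : Finset α) : insert 0 (sumsNE S) = subsetSums S := by
  ext x
  simp only [sumsNE, subsetSums, mem_insert, mem_image, mem_erase, mem_powerset]
  constructor
  · rintro (rfl | ⟨t, ⟨-, hts⟩, rfl⟩)
    exacts [⟨∅, empty_subset S, sum_empty⟩, ⟨t, hts, rfl⟩]
  · rintro ⟨t, hts, rfl⟩
    obtain rfl | ht := eq_or_ne t ∅
    exacts [Or.inl sum_empty, Or.inr ⟨t, ⟨ht, hts⟩, rfl⟩]

lemma insert_zero_subset_subsetSums (S : Finset α) : insert 0 S ⊆ subsetSums S := by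
  intro x hx
  rw [mem_subsetSums]
  obtain rfl | hx := mem_insert.mp hx
  exacts [⟨∅, empty_subset S, sum_empty⟩, ⟨{x}, singleton_subset_iff.mpr hx, sum_singleton _ _⟩]

lemma add_mem_subsetSums {S : Finset α} {a b : α} (ha : a ∈ S) (hb : b ∈ S) (hab : a ≠ b) :
    a + b ∈ subsetSums S :=
  mem_subsetSums.mpr ⟨{a, b}, insert_subset ha (singleton_subset_iff.mpr hb), sum_pair hab⟩

end SubsetSums

section SubsetSumsGroup

variable {α : Type*} [AddCommGroup α] [DecidableEq α]

lemma subsetSums_insert {S : Finset α} {a : α} (ha : a ∉ S) :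
    subsetSums (insert a S) = subsetSums S ∪ (a +ᵥ subsetSums S) := by
  rw [subsetSums, powerset_insert, image_union, image_image, subsetSums, vadd_finset_def,
    image_image]
  refine congrArg _ (image_congr fun t ht => ?_)
  simp only [Function.comp_apply, vadd_eq_add]
  rw [sum_insert fun hat => ha (mem_powerset.mp ht hat)]

lemma card_subsetSums_erase_le_card_inter_vadd {S : Finset α} {a : α} (ha : a ∈ S) :
    #(subsetSums (S.erase a)) ≤ #(subsetSums S ∩ (a +ᵥ subsetSums S)) := by
  have hS := subsetSums_insert (notMem_erase a S)
  rw [insert_erase ha] at hS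
  rw [← card_vadd_finset a]
  refine card_le_card (subset_inter ?_ (vadd_finset_subset_vadd_finset ?_)) <;> rw [hS]
  exacts [subset_union_right, subset_union_left]

end SubsetSumsGroup

section Moments

variable {R : Type*} [CommRing R] [DecidableEq R] {T : Finset R} {a u v : R}

lemma sum_comp_add_eq_of_vadd_sdiff (f : R → R) (hu : (a +ᵥ T) \ T = {u})
    (hv : T \ (a +ᵥ T) = {v}) : ∑ x ∈ T, f (a + x) = ∑ x ∈ T, f x + (f u - f v) := by
  have h := sum_sdiff_sub_sum_sdiff (s₂ := a +ᵥ T) (s₁ := T) (f := f)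
  rw [hu, hv, sum_singleton, sum_singleton, vadd_finset_def,
    sum_image (AddAction.injective a).injOn] at h
  rw [h, add_sub_cancel]
  rfl

/-- The hypotheses make `T` an arithmetic progression `v, v + a, …, u - a`, and the identity
computes its variance without knowing its first term: eliminate `u` and `v` from the shifts of
the first three power sums. -/
lemma card_pow_four_sub_card_sq_mul_sq_eq [IsDomain R] (ha : a ≠ 0) (hu : (a +ᵥ T) \ T = {u})
    (hv : T \ (a +ᵥ T) = {v}) :
    ((#T : R) ^ 4 - #T ^ 2) * a ^ 2 = 12 * #T * ∑ x ∈ T, x ^ 2 - 12 * (∑ x ∈ T, x) ^ 2 := by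
  have e1 := sum_comp_add_eq_of_vadd_sdiff id hu hv
  have e2 := sum_comp_add_eq_of_vadd_sdiff (· ^ 2) hu hv
  have e3 := sum_comp_add_eq_of_vadd_sdiff (· ^ 3) hu hv
  have square (x : R) : (a + x) ^ 2 = a ^ 2 + 2 * a * x + x ^ 2 := by ring
  have cube (x : R) : (a + x) ^ 3 = a ^ 3 + 3 * a ^ 2 * x + 3 * a * x ^ 2 + x ^ 3 := by ring
  simp only [id, square, cube] at e1 e2 e3
  rw [sum_add_distrib, sum_const, nsmul_eq_mul] at e1
  rw [sum_add_distrib, sum_add_distrib, sum_const, nsmul_eq_mul, ← mul_sum] at e2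
  rw [sum_add_distrib, sum_add_distrib, sum_add_distrib, sum_const, nsmul_eq_mul, ← mul_sum,
    ← mul_sum] at e3
  set M : R := (#T : R)
  set F := ∑ x ∈ T, x
  set F₂ := ∑ x ∈ T, x ^ 2
  have g2 : M * (u + v) = 2 * F + M * a := by
    apply mul_left_cancel₀ ha
    linear_combination (u + v) * e1 - e2
  have g3 : M * (u ^ 2 + u * v + v ^ 2) = 3 * F₂ + 3 * a * F + M * a ^ 2 := by
    apply mul_left_cancel₀ ha
    linear_combination (u ^ 2 + u * v + v ^ 2) * e1 - e3
  linear_combination (4 * M) * g3 - (3 * (M * (u + v) + 2 * F + M * a)) * g2 +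
    (M ^ 2 * (u - v + M * a)) * e1

end Moments

lemma natCast_ne_zero_of_pos_of_lt {p n : ℕ} (h0 : 0 < n) (hn : n < p) : (n : ZMod p) ≠ 0 :=
  (ZMod.natCast_eq_zero_iff n p).not.mpr (Nat.not_dvd_of_pos_of_lt h0 hn)

section ZModPrime

variable {p : ℕ} [Fact p.Prime]

lemma natCast_pow_four_sub_sq_ne_zero {n : ℕ} (h2 : 2 ≤ n) (hn : n + 2 ≤ p) :
    (n : ZMod p) ^ 4 - (n : ZMod p) ^ 2 ≠ 0 := by
  have hfac : (n : ZMod p) ^ 4 - (n : ZMod p) ^ 2 =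
      ((n - 1 : ℕ) : ZMod p) * n * n * (n + 1 : ℕ) := by
    push_cast [Nat.cast_sub (by omega : 1 ≤ n)]
    ring
  rw [hfac]
  refine mul_ne_zero (mul_ne_zero (mul_ne_zero ?_ ?_) ?_) ?_ <;>
    exact natCast_ne_zero_of_pos_of_lt (by omega) (by omega)

lemma eq_univ_of_vadd_finset_eq {T : Finset (ZMod p)} {a : ZMod p} (ha : a ≠ 0)
    (hT : T.Nonempty) (h : a +ᵥ T = T) : T = univ := by
  have hsub : T + {0, a} ⊆ T := add_subset_iff.mpr fun x hx y hy => by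
    simp only [mem_insert, mem_singleton] at hy
    obtain rfl | rfl := hy
    · rwa [add_zero]
    · rw [← h, add_comm]
      exact vadd_mem_vadd_finset hx
  have hcd := ZMod.cauchy_davenport Fact.out hT (insert_nonempty 0 {a})
  rw [card_pair ha.symm] at hcd
  have hp : p ≤ #T := by have := card_le_card hsub; omega
  exact eq_univ_of_card T (le_antisymm (card_le_univ T) (by simpa using hp))

lemma exists_sdiff_vadd_finset_eq_singleton {T : Finset (ZMod p)} {a : ZMod p} (ha : a ≠ 0)
    (hT : T.Nonempty) (hTu : T ≠ univ) (h : #T ≤ #(T ∩ (a +ᵥ T)) + 1) :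
    ∃ u v, (a +ᵥ T) \ T = {u} ∧ T \ (a +ᵥ T) = {v} := by
  have hcomm : #((a +ᵥ T) \ T) = #(T \ (a +ᵥ T)) := card_sdiff_comm (card_vadd_finset a T)
  have hle : #(T \ (a +ᵥ T)) ≤ 1 := by
    have := card_sdiff_add_card_inter T (a +ᵥ T)
    omega
  have hne : (T \ (a +ᵥ T)).Nonempty := by
    rw [nonempty_iff_ne_empty, Ne, sdiff_eq_empty_iff_subset]
    intro hsub
    exact hTu (eq_univ_of_vadd_finset_eq ha hT
      (eq_of_subset_of_card_le hsub (card_vadd_finset a T).le).symm)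
  have hone : #(T \ (a +ᵥ T)) = 1 := le_antisymm hle hne.card_pos
  obtain ⟨u, hu⟩ := card_eq_one.mp (hcomm.trans hone)
  obtain ⟨v, hv⟩ := card_eq_one.mp hone
  exact ⟨u, v, hu, hv⟩

lemma card_le_two_of_card_subsetSums_le {S : Finset (ZMod p)} (h0 : 0 ∉ S)
    (hp : #(subsetSums S) + 2 ≤ p)
    (hS : ∀ a ∈ S, #(subsetSums S) ≤ #(subsetSums (S.erase a)) + 1) : #S ≤ 2 := by
  obtain rfl | ⟨a, ha⟩ := S.eq_empty_or_nonempty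
  · simp
  have hT2 : 2 ≤ #(subsetSums S) := by
    have := card_le_card ((insert_subset_insert 0 (singleton_subset_iff.mpr ha)).trans
      (insert_zero_subset_subsetSums S))
    rwa [card_pair (ne_of_mem_of_not_mem ha h0).symm] at this
  have hsq (b : ZMod p) (hb : b ∈ S) :
      ((#(subsetSums S) : ZMod p) ^ 4 - #(subsetSums S) ^ 2) * b ^ 2 =
        12 * #(subsetSums S) * ∑ x ∈ subsetSums S, x ^ 2 - 12 * (∑ x ∈ subsetSums S, x) ^ 2 := by
    have hb0 : b ≠ 0 := ne_of_mem_of_not_mem hb h0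
    have hTu : subsetSums S ≠ univ := fun h => by
      rw [h, card_univ, ZMod.card] at hp
      omega
    have hinter := card_subsetSums_erase_le_card_inter_vadd hb
    obtain ⟨u, v, hu, hv⟩ := exists_sdiff_vadd_finset_eq_singleton hb0
      ⟨0, insert_zero_subset_subsetSums S (mem_insert_self 0 S)⟩ hTu (by have := hS b hb; omega)
    exact card_pow_four_sub_card_sq_mul_sq_eq hb0 hu hv
  have hsub : S ⊆ {a, -a} := fun b hb => by
    have hab : b ^ 2 = a ^ 2 :=
      mul_left_cancel₀ (natCast_pow_four_sub_sq_ne_zero hT2 hp) ((hsq b hb).trans (hsq a ha).symm)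
    rw [mem_insert, mem_singleton]
    exact sq_eq_sq_iff_eq_or_eq_neg.mp hab
  exact (card_le_card hsub).trans card_le_two

lemma subsetSums_eq_univ {S : Finset (ZMod p)} (h0 : 0 ∉ S) (hS : p + 1 ≤ 2 * #S) :
    subsetSums S = univ := by
  by_contra hne
  obtain ⟨w, hw⟩ : ∃ w, w ∉ subsetSums S := by simpa [eq_univ_iff_forall] using hne
  have hw0S : w ∉ insert 0 S := fun h => hw (insert_zero_subset_subsetSums S h)
  rw [mem_insert, not_or] at hw0S
  have hSp : #S + 1 ≤ p := by
    simpa [card_insert_of_notMem h0] using card_le_univ (insert 0 S)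
  have h2 : (2 : ZMod p) ≠ 0 := by
    exact_mod_cast natCast_ne_zero_of_pos_of_lt (p := p) (n := 2) (by omega) (by omega)
  set B := S.image (w - ·)
  have hB : #B = #S := card_image_of_injective _ sub_right_injective
  have hunion : S ∪ B ⊆ (univ.erase 0).erase w := by
    intro x hx
    simp only [mem_union, B, mem_image, mem_erase, mem_univ, and_true] at hx ⊢
    obtain hx | ⟨y, hy, rfl⟩ := hx
    · exact ⟨ne_of_mem_of_not_mem hx hw0S.2, ne_of_mem_of_not_mem hx h0⟩
    · exact ⟨fun h => ne_of_mem_of_not_mem hy h0 (by linear_combination -h),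
        fun h => hw0S.2 (by rwa [← sub_eq_zero.mp h] at hy)⟩
  have hdouble : ∀ x ∈ S ∩ B, 2 * x = w := by
    intro x hx
    obtain ⟨hxS, hxB⟩ := mem_inter.mp hx
    obtain ⟨y, hy, rfl⟩ := mem_image.mp hxB
    by_contra hne
    refine hw ?_
    simpa using add_mem_subsetSums hy hxS (fun h => hne (by linear_combination -h))
  have hinter : #(S ∩ B) ≤ 1 := card_le_one.mpr fun x hx y hy =>
    mul_left_cancel₀ h2 ((hdouble x hx).trans (hdouble y hy).symm)
  have := card_le_card hunion
  rw [card_erase_of_mem (by simpa using hw0S.1), card_erase_of_mem (mem_univ 0), card_univ,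
    ZMod.card] at this
  have := card_union_add_card_inter S B
  omega

theorem min_le_card_subsetSums {S : Finset (ZMod p)} (h0 : 0 ∉ S) (hS : 2 ≤ #S) :
    min p (2 * #S - 1) ≤ #(subsetSums S) := by
  induction S using Finset.strongInduction with
  | H S ih =>
  by_cases hp : p + 1 ≤ 2 * #S
  · rw [subsetSums_eq_univ h0 hp, card_univ, ZMod.card]
    exact min_le_left _ _
  have hsub := card_le_card (insert_zero_subset_subsetSums S)
  rw [card_insert_of_notMem h0] at hsub
  by_contra! hlt
  have hgrowth : ∀ a ∈ S, #(subsetSums S) ≤ #(subsetSums (S.erase a)) + 1 := fun a ha => by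
    have := ih (S.erase a) (erase_ssubset ha) (fun h => h0 (mem_of_mem_erase h))
    rw [card_erase_of_mem ha] at this
    omega
  have := card_le_two_of_card_subsetSums_le h0 (by omega) hgrowth
  omega

end ZModPrime

theorem stmt11 (q : ℕ) (hq : q.Prime) (S : Finset (ZMod q))
    (h0 : (0 : ZMod q) ∉ S) (l : ℕ) (hl : 2 ≤ l) (hcard : S.card = l) :
    min q (2 * l - 1) ≤ (insert (0 : ZMod q) (sumsNE S)).card := by
  have : Fact q.Prime := ⟨hq⟩
  subst hcard
  rw [insert_zero_sumsNE]
  exact min_le_card_subsetSums h0 hl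
end

section
/- Let p ≥ 7 be prime and let a₁ + H, ..., a_t + H be t ≥ ⌊2√(p-2)⌋ distinct nonzero elements of a cyclic group G/H of prime order p. Then for every x ∈ G/H there exist integers f₁, ..., f_t with 1 ≤ fᵢ ≤ 2 for all i such that x = f₁(a₁+H) + ... + f_t(a_t+H). -/
/-!
Adjoining `0` to the `t` given residues gives a set `A` of `t + 1` elements with
`h * (#A - h) ≥ p - 1` for `h = (t + 1) / 2`, so by the Dias da Silva–Hamidoune theorem every
residue is a sum of `h` distinct elements of `A`, i.e. a subset sum of the `aᵢ`. Writing
`x - ∑ aᵢ` as such a subset sum yields coefficients `fᵢ ∈ {1, 2}`.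

Dias da Silva–Hamidoune is the Alon–Nathanson–Ruzsa argument: apply the combinatorial
Nullstellensatz on `A^h` to `f = V(X) * ((∑ Xᵢ - y) ^ (p - 1) - 1)`, where `V` is the Vandermonde
determinant, so that `f(s) ≠ 0` forces distinct `sᵢ` with `∑ sᵢ = y` (Fermat). The top-degree
part of `f` is `V(X) * (∑ Xᵢ) ^ (p - 1)`; its coefficient at `X^b`, for
`b₀ < ⋯ < b_{h-1} < #A`, is `(p - 1)! * ∏_{i<j} (b_j - b_i) / ∏ bᵢ!`, a unit mod `p`.
-/

open Finset MvPolynomial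
open scoped Nat

theorem Nat.sum_range_add_div (k n : ℕ) (hn : 0 < n) : ∑ i ∈ range n, (k + i) / n = k := by
  induction k with
  | zero => exact sum_eq_zero fun i hi => Nat.div_eq_of_lt (by simpa using mem_range.mp hi)
  | succ k ih =>
    have hshift := (sum_range_succ' (fun i => (k + i) / n) n).symm.trans
      (sum_range_succ (fun i => (k + i) / n) n)
    have hlast : (k + n) / n = k / n + 1 := Nat.add_div_right k hn
    simp only [add_zero, hlast] at hshift
    have : ∑ i ∈ range n, (k + 1 + i) / n = ∑ i ∈ range n, (k + (i + 1)) / n :=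
      sum_congr rfl fun i _ => by rw [add_assoc, add_comm 1 i]
    omega

theorem Nat.exists_strictMono_sum_eq {h m K : ℕ} (hh : 0 < h) (hhm : h ≤ m)
    (hK : K ≤ h * (m - h)) :
    ∃ b : Fin h → ℕ, StrictMono b ∧ (∀ i, b i < m) ∧
      ∑ i, b i = K + ∑ i : Fin h, (i : ℕ) := by
  refine ⟨fun i => i + (K + i) / h, fun i j hij => ?_, fun i => ?_, ?_⟩
  · have : (K + i) / h ≤ (K + j) / h := Nat.div_le_div_right (by simp [hij.le])
    simp only
    omega
  · have hi := i.isLt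
    have : (K + i) / h < m - h + 1 := by
      rw [Nat.div_lt_iff_lt_mul hh]
      nlinarith
    simp only
    omega
  · rw [sum_add_distrib, add_comm, Fin.sum_univ_eq_sum_range (fun i => (K + i) / h),
      Nat.sum_range_add_div K h hh]

theorem Nat.sub_one_le_div_two_mul_sub {p n : ℕ} (hp : Odd p)
    (hn : Nat.sqrt (4 * (p - 2)) < n) :
    p - 1 ≤ n / 2 * (n - n / 2) := by
  rw [Nat.sqrt_lt'] at hn
  obtain ⟨w, rfl⟩ := hp
  rcases Nat.even_or_odd' n with ⟨u, rfl | rfl⟩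
  · have h1 : 2 * u / 2 = u := by omega
    have h2 : (2 * u) ^ 2 = 4 * (u * u) := by ring
    rw [h1, show 2 * u - u = u by omega]
    omega
  · -- `u * (u + 1)` is even while `p - 2` is odd
    obtain ⟨v, hv⟩ := Nat.even_mul_succ_self u
    have h1 : (2 * u + 1) / 2 = u := by omega
    have h2 : (2 * u + 1) ^ 2 = 4 * (u * (u + 1)) + 1 := by ring
    rw [h1, show 2 * u + 1 - u = u + 1 by omega]
    omega

theorem Nat.prod_factorial_mul_multinomial_sub {ι : Type*} [Fintype ι] {b d : ι → ℕ}
    (hdb : d ≤ b) :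
    (∏ i, (b i)!) * Nat.multinomial univ (b - d) =
      (∑ i, (b i - d i))! * ∏ i, (b i).descFactorial (d i) := by
  have hfac : ∏ i, (b i)! = (∏ i, (b i - d i)!) * ∏ i, (b i).descFactorial (d i) := by
    rw [← prod_mul_distrib]
    exact prod_congr rfl fun i _ => (Nat.factorial_mul_descFactorial (hdb i)).symm
  rw [hfac, mul_right_comm]
  exact congrArg (· * _) (Nat.multinomial_spec _ _)

namespace MvPolynomial

variable {R σ : Type*} [CommRing R] {n : ℕ}

theorem prod_X_pow_eq_monomial_equivFunOnFinite [Fintype σ] (d : σ → ℕ) :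
    ∏ i, (X i : MvPolynomial σ R) ^ d i = monomial (Finsupp.equivFunOnFinite.symm d) 1 := by
  rw [← prod_X_pow_eq_monomial]
  exact (prod_subset (subset_univ _) fun i _ hi => by simp_all).symm

theorem prod_factorial_mul_coeff_prod_X_pow_mul_sum_X_pow [Fintype σ] (b : σ →₀ ℕ)
    (d : σ → ℕ) (k : ℕ) (hk : ∑ i, b i = ∑ i, d i + k) :
    (∏ i, ((b i)! : R)) * coeff b ((∏ i, X i ^ d i) * (∑ i, X i) ^ k) =
      k ! * ∏ i, ((b i).descFactorial (d i) : R) := by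
  classical
  rw [prod_X_pow_eq_monomial_equivFunOnFinite, coeff_monomial_mul', one_mul]
  by_cases hdb : d ≤ ⇑b
  · have hsub : ⇑(b - Finsupp.equivFunOnFinite.symm d) = ⇑b - d := by ext; simp
    have hsum : ∑ i, (b i - d i) = k := by
      rw [sum_tsub_distrib _ fun i _ => hdb i]
      omega
    rw [if_pos (show Finsupp.equivFunOnFinite.symm d ≤ b from fun i => hdb i),
      coeff_sum_X_pow_of_fintype, Finsupp.sum_fintype _ _ fun _ => rfl, hsub]
    simp only [Pi.sub_apply, hsum, ↓reduceIte]
    rw [Finsupp.multinomial_eq_of_support_subset (subset_univ _), hsub]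
    have := congrArg (Nat.cast (R := R)) (Nat.prod_factorial_mul_multinomial_sub hdb)
    push_cast [hsum] at this
    exact this
  · obtain ⟨j, hj⟩ : ∃ j, b j < d j := by simpa [Pi.le_def] using hdb
    have hle : ¬ Finsupp.equivFunOnFinite.symm d ≤ b := fun h => (h j).not_gt (by simpa using hj)
    rw [if_neg hle, mul_zero, prod_eq_zero (mem_univ j)
      (by simp [Nat.descFactorial_eq_zero_iff_lt.mpr hj]), mul_zero]

theorem prod_factorial_mul_coeff_det_vandermonde_mul_sum_X_pow [IsDomain R]
    (b : Fin n →₀ ℕ) (k : ℕ) (hk : ∑ i, b i = ∑ i : Fin n, (i : ℕ) + k) :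
    (∏ i, ((b i)! : R)) *
        coeff b ((Matrix.vandermonde fun i => (X i : MvPolynomial (Fin n) R)).det *
          (∑ i, X i) ^ k) =
      k ! * (Matrix.vandermonde fun i => (b i : R)).det := by
  rw [Matrix.det_eval_matrixOfPolynomials_eq_det_vandermonde _ (fun j => descPochhammer R j)
    (fun j => descPochhammer_natDegree R j) (fun j => monic_descPochhammer R j)]
  simp only [descPochhammer_eval_eq_descFactorial]
  rw [Matrix.det_apply, Matrix.det_apply, sum_mul, coeff_sum, mul_sum, mul_sum]
  refine sum_congr rfl fun π _ => ?_
  have hX : ∏ i, Matrix.vandermonde (fun i => (X i : MvPolynomial (Fin n) R)) (π i) i =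
      ∏ j, X j ^ (π.symm j : ℕ) := by
    rw [← Equiv.prod_comp π (fun j => X j ^ (π.symm j : ℕ))]
    simp [Matrix.vandermonde_apply]
  have hd : ∏ i, Matrix.of (fun i j : Fin n => ((b i).descFactorial j : R)) (π i) i =
      ∏ j, ((b j).descFactorial (π.symm j) : R) := by
    rw [← Equiv.prod_comp π (fun j => ((b j).descFactorial (π.symm j) : R))]
    simp
  have hsum : ∑ j, b j = ∑ j, (π.symm j : ℕ) + k := by
    rw [Equiv.sum_comp π.symm (fun i : Fin n => (i : ℕ)), hk]
  rw [smul_mul_assoc, coeff_smul, mul_smul_comm, hX, hd, mul_smul_comm,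
    prod_factorial_mul_coeff_prod_X_pow_mul_sum_X_pow b _ k hsum]

theorem totalDegree_det_vandermonde_X_le :
    (Matrix.vandermonde fun i => (X i : MvPolynomial (Fin n) R)).det.totalDegree ≤
      ∑ i : Fin n, (i : ℕ) := by
  rw [Matrix.det_apply]
  refine totalDegree_finsetSum_le fun π _ => (totalDegree_smul_le _ _).trans ?_
  refine (totalDegree_finsetProd _ _).trans (sum_le_sum fun i _ => ?_)
  rw [Matrix.vandermonde_apply, X_pow_eq_monomial]
  exact (totalDegree_monomial_le _ _).trans (by simp)

theorem totalDegree_sum_X_le [Fintype σ] :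
    (∑ i, X i : MvPolynomial σ R).totalDegree ≤ 1 :=
  totalDegree_finsetSum_le fun i _ => (totalDegree_monomial_le _ _).trans (by simp)

theorem totalDegree_add_C_pow_sub_pow_le {g : MvPolynomial σ R}
    (hg : g.totalDegree ≤ 1) (c : R) (k : ℕ) :
    ((g + C c) ^ k - g ^ k).totalDegree ≤ k - 1 := by
  rw [add_pow, sum_range_succ, Nat.sub_self, pow_zero, Nat.choose_self, Nat.cast_one, mul_one,
    mul_one, add_sub_cancel_right]
  refine totalDegree_finsetSum_le fun m hm => ?_
  have hmk : m ≤ k - 1 := by have := mem_range.mp hm; omega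
  rw [← map_pow, ← map_natCast (C : R →+* MvPolynomial σ R), mul_assoc, ← map_mul]
  refine (totalDegree_mul _ _).trans ?_
  rw [totalDegree_C, add_zero]
  exact (totalDegree_pow _ _).trans (by nlinarith)

theorem coeff_mul_eq_coeff_mul_of_totalDegree_sub_lt {P Q Q' : MvPolynomial σ R}
    {m : σ →₀ ℕ} (h : P.totalDegree + (Q - Q').totalDegree < m.degree) :
    coeff m (P * Q) = coeff m (P * Q') := by
  rw [← sub_eq_zero, ← coeff_sub, ← mul_sub]
  exact coeff_eq_zero_of_totalDegree_lt ((totalDegree_mul _ _).trans_lt h)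

theorem totalDegree_det_vandermonde_mul_sum_X_add_C_pow_sub_one_le (c : R) (k : ℕ) :
    ((Matrix.vandermonde fun i => (X i : MvPolynomial (Fin n) R)).det *
        ((∑ i, X i + C c) ^ k - 1)).totalDegree ≤ ∑ i : Fin n, (i : ℕ) + k := by
  refine (totalDegree_mul _ _).trans (add_le_add totalDegree_det_vandermonde_X_le ?_)
  refine (totalDegree_sub _ _).trans (max_le ((totalDegree_pow _ _).trans ?_) (by simp))
  have : (∑ i, X i + C c : MvPolynomial (Fin n) R).totalDegree ≤ 1 :=
    (totalDegree_add _ _).trans (max_le totalDegree_sum_X_le (by simp))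
  nlinarith

theorem coeff_det_vandermonde_mul_sum_X_add_C_pow_sub_one (c : R) {k : ℕ} (hk : 0 < k)
    {b : Fin n →₀ ℕ} (hb : b.degree = ∑ i : Fin n, (i : ℕ) + k) :
    coeff b ((Matrix.vandermonde fun i => (X i : MvPolynomial (Fin n) R)).det *
        ((∑ i, X i + C c) ^ k - 1)) =
      coeff b ((Matrix.vandermonde fun i => (X i : MvPolynomial (Fin n) R)).det *
        (∑ i, X i) ^ k) := by
  apply coeff_mul_eq_coeff_mul_of_totalDegree_sub_lt
  have hV := totalDegree_det_vandermonde_X_le (R := R) (n := n)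
  have hrest :
      ((∑ i, X i + C c) ^ k - 1 - (∑ i, X i) ^ k : MvPolynomial (Fin n) R).totalDegree ≤
        k - 1 := by
    rw [sub_right_comm]
    exact (totalDegree_sub _ _).trans
      (max_le (totalDegree_add_C_pow_sub_pow_le totalDegree_sum_X_le c k) (by simp))
  omega

end MvPolynomial

namespace ZMod
variable {p : ℕ} [Fact p.Prime]

theorem coeff_det_vandermonde_mul_sum_X_pow_ne_zero {n : ℕ} {b : Fin n →₀ ℕ}
    (hb : Function.Injective b) (hbp : ∀ i, b i < p) {k : ℕ} (hkp : k < p)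
    (hk : ∑ i, b i = ∑ i : Fin n, (i : ℕ) + k) :
    coeff b ((Matrix.vandermonde fun i => (X i : MvPolynomial (Fin n) (ZMod p))).det *
      (∑ i, X i) ^ k) ≠ 0 := by
  intro h0
  have key := prod_factorial_mul_coeff_det_vandermonde_mul_sum_X_pow (R := ZMod p) b k hk
  rw [h0, mul_zero] at key
  refine mul_ne_zero ?_ (Matrix.det_vandermonde_ne_zero_iff.mpr fun i j hij => ?_) key.symm
  · rw [Ne, ZMod.natCast_eq_zero_iff, (Fact.out : p.Prime).dvd_factorial]
    omega
  · exact hb (by rw [← ZMod.val_cast_of_lt (hbp i), ← ZMod.val_cast_of_lt (hbp j), hij])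

theorem exists_injective_sum_eq (A : Finset (ZMod p)) {h : ℕ} (hA : p - 1 ≤ h * (#A - h))
    (y : ZMod p) :
    ∃ s : Fin h → ZMod p, (∀ i, s i ∈ A) ∧ Function.Injective s ∧ ∑ i, s i = y := by
  have hp := (Fact.out : p.Prime).two_le
  have hh : 0 < h := Nat.pos_of_ne_zero fun h0 => by simp [h0] at hA; omega
  have hhA : h ≤ #A := by
    by_contra hlt
    rw [Nat.sub_eq_zero_of_le (not_le.mp hlt).le, mul_zero] at hA
    omega
  have hAp : #A ≤ p := by simpa using card_le_univ A
  obtain ⟨b, hmono, hbA, hbsum⟩ := Nat.exists_strictMono_sum_eq hh hhA hA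
  set t : Fin h →₀ ℕ := Finsupp.equivFunOnFinite.symm b
  have ht : t.degree = ∑ i : Fin h, (i : ℕ) + (p - 1) := by
    rw [Finsupp.degree_eq_sum]
    simpa [t, add_comm] using hbsum
  set f := (Matrix.vandermonde fun i => (X i : MvPolynomial (Fin h) (ZMod p))).det *
    ((∑ i, X i + C (-y)) ^ (p - 1) - 1)
  have hf : coeff t f ≠ 0 := by
    rw [coeff_det_vandermonde_mul_sum_X_add_C_pow_sub_one _ (by omega) ht]
    exact coeff_det_vandermonde_mul_sum_X_pow_ne_zero (b := t) hmono.injective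
      (fun i => (hbA i).trans_le hAp) (by omega) (by simpa [t, add_comm] using hbsum)
  have hfdeg : f.totalDegree = t.degree := by
    refine le_antisymm (ht ▸ totalDegree_det_vandermonde_mul_sum_X_add_C_pow_sub_one_le _ _) ?_
    rw [Finsupp.degree_apply]
    exact le_totalDegree (mem_support_iff.mpr hf)
  obtain ⟨s, hsA, hs⟩ :=
    combinatorial_nullstellensatz_exists_eval_nonzero f t hf hfdeg (fun _ => A) fun i => hbA i
  rw [map_mul] at hs
  refine ⟨s, hsA, ?_, ?_⟩
  · have hV := left_ne_zero_of_mul hs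
    rw [RingHom.map_det] at hV
    refine Matrix.det_vandermonde_ne_zero_iff.mp (by convert hV using 2; ext; simp)
  · have hσ := right_ne_zero_of_mul hs
    by_contra hne
    refine hσ ?_
    simp only [map_sub, map_pow, map_add, map_sum, eval_X, eval_C, map_one, ← sub_eq_add_neg]
    rw [ZMod.pow_card_sub_one_eq_one (sub_ne_zero.mpr hne), sub_self]

theorem exists_subset_card_eq_sum_eq (A : Finset (ZMod p)) {h : ℕ} (hA : p - 1 ≤ h * (#A - h))
    (y : ZMod p) : ∃ B ⊆ A, #B = h ∧ ∑ x ∈ B, x = y := by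
  obtain ⟨s, hsA, hs, hsum⟩ := exists_injective_sum_eq A hA y
  refine ⟨univ.map ⟨s, hs⟩, fun x hx => ?_, by simp, by simpa using hsum⟩
  obtain ⟨i, -, rfl⟩ := mem_map.mp hx
  exact hsA i

theorem exists_sum_eq_of_sqrt_le_card {ι : Type*} [Fintype ι] (hp2 : p ≠ 2) {a : ι → ZMod p}
    (ha : Function.Injective a) (ha0 : ∀ i, a i ≠ 0)
    (hcard : Nat.sqrt (4 * (p - 2)) ≤ Fintype.card ι) (x : ZMod p) :
    ∃ I : Finset ι, ∑ i ∈ I, a i = x := by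
  classical
  set A := insert 0 (univ.image a)
  have hA : #A = Fintype.card ι + 1 := by
    rw [card_insert_of_notMem (by simpa using ha0), card_image_of_injective _ ha, card_univ]
  have hbound := Nat.sub_one_le_div_two_mul_sub (n := #A)
    ((Fact.out : p.Prime).odd_of_ne_two hp2) (by omega)
  obtain ⟨B, hBA, -, hB⟩ := exists_subset_card_eq_sum_eq A hbound x
  refine ⟨B.preimage a ha.injOn, ?_⟩
  refine (sum_preimage a B ha.injOn (fun y => y) fun y hyB hya => ?_).trans hB
  have hy := hBA hyB
  simp only [A, mem_insert, mem_image, mem_univ, true_and] at hy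
  exact hy.resolve_right hya

end ZMod

theorem exists_one_two_nsmul_sum_eq {G ι : Type*} [AddCommGroup G] [Fintype ι] {a : ι → G}
    (ha : ∀ z, ∃ I : Finset ι, ∑ i ∈ I, a i = z) (x : G) :
    ∃ f : ι → ℕ, (∀ i, 1 ≤ f i ∧ f i ≤ 2) ∧ x = ∑ i, f i • a i := by
  classical
  obtain ⟨I, hI⟩ := ha (x - ∑ i, a i)
  refine ⟨fun i => if i ∈ I then 2 else 1, fun i => by by_cases hi : i ∈ I <;> simp [hi], ?_⟩
  have hsplit : ∀ i, (if i ∈ I then 2 else 1) • a i = a i + if i ∈ I then a i else 0 := by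
    intro i
    split_ifs <;> simp [two_smul]
  rw [sum_congr rfl fun i _ => hsplit i, sum_add_distrib, sum_ite_mem, univ_inter, hI]
  abel

theorem stmt15 (p t : ℕ) (hp : p.Prime) (hp7 : 7 ≤ p)
    (ht : Nat.sqrt (4 * (p - 2)) ≤ t)
    (a : Fin t → ZMod p) (hinj : Function.Injective a) (h0 : ∀ i, a i ≠ 0) :
    ∀ x : ZMod p, ∃ f : Fin t → ℕ, (∀ i, 1 ≤ f i ∧ f i ≤ 2) ∧
      x = ∑ i, f i • a i := by
  have : Fact p.Prime := ⟨hp⟩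
  exact exists_one_two_nsmul_sum_eq
    (ZMod.exists_sum_eq_of_sqrt_le_card (by omega) hinj h0 (by simpa using ht))
end
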